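/- Let n ≥ 2 be an integer, λ = (λ_1 ≥ λ_2 ≥ … ≥ λ_n ≥ 0) a partition, and q, t ∈ ℂ with 0 < |q| < 1 and t ≠ 0 such that b_j q^k ≠ 1 for all j = 1,…,n−1 and all integers k ≥ 0. Then the function ψ_λ(q,t;z) is a polynomial in z supported in degrees λ_n through λ_1: there exist complex coefficients c_{λ_n}, c_{λ_n+1}, …, c_{λ_1} such that for every z ∈ ℂ with |z| < 1 and (q z t^{−n}; q)_∞ ≠ 0 one has ψ_λ(q,t;z) = Σ_{k=λ_n}^{λ_1} c_k z^k. -/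

import Mathlib

/-!
STATEMENT 0: For `n = m + 2 ≥ 2`, a partition `λ₁ ≥ … ≥ λₙ ≥ 0`, and `q, t ∈ ℂ` with
`0 < |q| < 1`, `t ≠ 0`, and `bⱼ qᵏ ≠ 1` for all `j` and `k ≥ 0`, the function
`ψ_λ(q,t;z)` is a polynomial in `z` supported in degrees `λₙ` through `λ₁`.
-/

/-- `(a;q)_∞ = ∏_{k=0}^∞ (1 - a q^k)`. -/
noncomputable def qPochInf (a q : ℂ) : ℂ := ∏' k : ℕ, (1 - a * q ^ k)

/-- `(a;q)_m = ∏_{k=0}^{m-1} (1 - a q^k)` for `m : ℕ`. -/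
noncomputable def qPochN (a q : ℂ) (m : ℕ) : ℂ := ∏ k ∈ Finset.range m, (1 - a * q ^ k)

/-- The basic hypergeometric series `_{r+1}φ_r(a₁,…,a_{r+1}; b₁,…,b_r; q, z)`. -/
noncomputable def bhs {r : ℕ} (a : Fin (r + 1) → ℂ) (b : Fin r → ℂ) (q z : ℂ) : ℂ :=
  ∑' m : ℕ, (∏ i, qPochN (a i) q m) / (qPochN q q m * ∏ j, qPochN (b j) q m) * z ^ m

/-- `a_i = q^{1+λ_n-λ_i} t^{i-1-n}`, for `i = 1,…,n` (zero-based index: `i : Fin n`,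
`n = m + 2`). -/
noncomputable def aPar (m : ℕ) (lam : Fin (m + 2) → ℕ) (q t : ℂ) (i : Fin (m + 2)) : ℂ :=
  q ^ (1 + (lam (Fin.last (m + 1)) : ℤ) - (lam i : ℤ)) * t ^ ((i : ℤ) - (m + 2 : ℤ))

/-- `b_j = t a_j`, for `j = 1,…,n-1`. -/
noncomputable def bPar (m : ℕ) (lam : Fin (m + 2) → ℕ) (q t : ℂ) (j : Fin (m + 1)) : ℂ :=
  t * aPar m lam q t j.castSucc

/-- `φ_λ(q,t;z) = z^{λ_n} · _nφ_{n-1}(a; b; q, z)`. -/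
noncomputable def phiLam (m : ℕ) (lam : Fin (m + 2) → ℕ) (q t z : ℂ) : ℂ :=
  z ^ (lam (Fin.last (m + 1))) * bhs (aPar m lam q t) (bPar m lam q t) q z

/-- `ψ_λ(q,t;z) = (z;q)_∞ / (q z t^{-n};q)_∞ · φ_λ(q,t;z)`. -/
noncomputable def psiLam (m : ℕ) (lam : Fin (m + 2) → ℕ) (q t z : ℂ) : ℂ :=
  qPochInf z q / qPochInf (q * z * t ^ (-(m + 2 : ℤ))) q * phiLam m lam q t z

open Finset Filter Complex

lemma qPochN_zero (a q : ℂ) : qPochN a q 0 = 1 := by simp [qPochN]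

lemma qPochN_succ (a q : ℂ) (k : ℕ) :
    qPochN a q (k+1) = qPochN a q k * (1 - a * q ^ k) := by
  simp [qPochN, Finset.prod_range_succ]

lemma qPochN_add (a q : ℂ) (s k : ℕ) :
    qPochN a q (s+k) = qPochN a q s * qPochN (a * q ^ s) q k := by
  unfold qPochN
  rw [Finset.prod_range_add]
  congr 1
  refine Finset.prod_congr rfl fun i _ => ?_
  rw [pow_add]; ring

lemma qPochN_swap (a q : ℂ) (s k : ℕ) :
    qPochN a q s * qPochN (a * q ^ s) q k = qPochN a q k * qPochN (a * q ^ k) q s := by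
  rw [← qPochN_add, ← qPochN_add, Nat.add_comm]

lemma qPochN_ne_zero {a q : ℂ} {s : ℕ} (h : ∀ i < s, 1 - a * q ^ i ≠ 0) :
    qPochN a q s ≠ 0 :=
  Finset.prod_ne_zero_iff.2 fun i hi => h i (Finset.mem_range.1 hi)

lemma one_sub_ne_zero_of_norm_lt_one {w : ℂ} (h : ‖w‖ < 1) : 1 - w ≠ 0 := by
  intro hc
  have : w = 1 := by linear_combination -hc
  simp [this] at h

lemma factor_ne_zero {a q : ℂ} (ha : ‖a‖ < 1) (hq : ‖q‖ ≤ 1) (k : ℕ) :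
    1 - a * q ^ k ≠ 0 := by
  apply one_sub_ne_zero_of_norm_lt_one
  calc ‖a * q ^ k‖ = ‖a‖ * ‖q‖ ^ k := by simp [norm_pow]
  _ ≤ ‖a‖ * 1 := by
      apply mul_le_mul_of_nonneg_left _ (norm_nonneg a)
      exact pow_le_one₀ (norm_nonneg q) hq
  _ < 1 := by simpa using ha

lemma summable_qlog {a q : ℂ} (hq : ‖q‖ < 1) :
    Summable (fun k : ℕ => Complex.log (1 - a * q ^ k)) := by
  obtain ⟨K, hK⟩ : ∃ K : ℕ, ‖a‖ * ‖q‖ ^ K ≤ 1/2 := by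
    rcases eq_or_ne a 0 with rfl | ha
    · exact ⟨0, by norm_num⟩
    · have := tendsto_pow_atTop_nhds_zero_of_norm_lt_one (x := q) hq
      have h2 : Tendsto (fun K : ℕ => ‖a‖ * ‖q‖ ^ K) atTop (nhds (‖a‖ * 0)) := by
        exact (tendsto_const_nhds.mul ((tendsto_pow_atTop_nhds_zero_of_lt_one
          (norm_nonneg q) hq)))
      rw [mul_zero] at h2
      have := (h2.eventually_le_const (by norm_num : (0:ℝ) < 1/2)).exists
      exact ⟨this.choose, this.choose_spec⟩
  rw [← summable_nat_add_iff K]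
  apply Summable.of_norm
  have hgeom : Summable (fun k : ℕ => (3/2) * (‖a‖ * ‖q‖ ^ K) * ‖q‖ ^ k) :=
    (summable_geometric_of_lt_one (norm_nonneg q) hq).mul_left _
  apply Summable.of_nonneg_of_le (fun k => norm_nonneg _) _ hgeom
  intro k
  have hb : ‖-(a * q ^ (k + K))‖ ≤ 1/2 := by
    rw [norm_neg, norm_mul, norm_pow]
    calc ‖a‖ * ‖q‖ ^ (k + K) = (‖a‖ * ‖q‖ ^ K) * ‖q‖ ^ k := by rw [pow_add]; ring
    _ ≤ (1/2) * 1 := by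
        apply mul_le_mul hK (pow_le_one₀ (norm_nonneg q) hq.le) (by positivity)
        norm_num
    _ = 1/2 := by norm_num
  have : (1 : ℂ) - a * q ^ (k + K) = 1 + -(a * q ^ (k + K)) := by ring
  rw [this]
  calc ‖Complex.log (1 + -(a * q ^ (k+K)))‖ ≤ (3/2) * ‖-(a * q ^ (k+K))‖ :=
        norm_log_one_add_half_le_self hb
  _ ≤ (3/2) * (‖a‖ * ‖q‖ ^ K) * ‖q‖ ^ k := by
      rw [norm_neg, norm_mul, norm_pow, pow_add]
      rw [mul_assoc]
      apply mul_le_mul_of_nonneg_left _ (by norm_num)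
      calc ‖a‖ * (‖q‖ ^ k * ‖q‖ ^ K) = ‖a‖ * ‖q‖ ^ K * ‖q‖ ^ k := by ring
      _ ≤ _ := le_refl _

lemma hasProd_zero_of_exists_eq_zero' {f : ℕ → ℂ} (h : ∃ K, f K = 0) : HasProd f 0 := by
  obtain ⟨K, hK⟩ := h
  have : ∀ᶠ s : Finset ℕ in atTop, ∏ i ∈ s, f i = 0 := by
    filter_upwards [Filter.eventually_ge_atTop {K}] with s hs
    exact Finset.prod_eq_zero (hs (Finset.mem_singleton_self K)) hK
  exact Tendsto.congr' (this.mono fun s hs => hs.symm) tendsto_const_nhds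

lemma hasProd_qPochInf {q : ℂ} (hq : ‖q‖ < 1) (a : ℂ) :
    HasProd (fun k : ℕ => 1 - a * q ^ k) (qPochInf a q) := by
  by_cases h : ∀ k : ℕ, 1 - a * q ^ k ≠ 0
  · have := (Complex.multipliable_of_summable_log (summable_qlog (a := a) hq)).hasProd
    exact this
  · push_neg at h
    have h0 : HasProd (fun k : ℕ => 1 - a * q ^ k) 0 := hasProd_zero_of_exists_eq_zero h
    have : qPochInf a q = 0 := h0.tprod_eq
    rw [this]; exact h0

lemma multipliable_qPochInf {q : ℂ} (hq : ‖q‖ < 1) (a : ℂ) :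
    Multipliable (fun k : ℕ => 1 - a * q ^ k) := ⟨_, hasProd_qPochInf hq a⟩

lemma qPochInf_ne_zero {a q : ℂ} (hq : ‖q‖ < 1) (h : ∀ k : ℕ, 1 - a * q ^ k ≠ 0) :
    qPochInf a q ≠ 0 := by
  have := Complex.cexp_tsum_eq_tprod (f := fun k : ℕ => 1 - a * q ^ k)
      (fun k => h k) (summable_qlog hq)
  rw [qPochInf, ← this]
  exact Complex.exp_ne_zero _

lemma qPochInf_split {q : ℂ} (hq : ‖q‖ < 1) (a : ℂ) (d : ℕ) :
    qPochInf a q = qPochN a q d * qPochInf (a * q ^ d) q := by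
  have hm : Multipliable (fun n : ℕ => 1 - a * q ^ (n + d)) :=
    (multipliable_qPochInf hq (a * q ^ d)).congr fun n => by rw [pow_add]; ring
  have h := Multipliable.prod_mul_tprod_nat_mul' (f := fun k : ℕ => 1 - a * q ^ k) (k := d) hm
  have h2 : qPochInf (a * q ^ d) q = ∏' k : ℕ, (1 - a * q ^ (k + d)) :=
    tprod_congr fun k => by rw [pow_add]; ring
  rw [h2, qPochInf, qPochN, ← h]

lemma tendsto_qPochN {q : ℂ} (hq : ‖q‖ < 1) (a : ℂ) :
    Tendsto (fun k => qPochN a q k) atTop (nhds (qPochInf a q)) :=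
  (hasProd_qPochInf hq a).tendsto_prod_nat

lemma qPochN_norm_le {q : ℂ} (hq : ‖q‖ < 1) (a : ℂ) (k : ℕ) :
    ‖qPochN a q k‖ ≤ Real.exp (‖a‖ * (1 - ‖q‖)⁻¹) := by
  have hsum : ∀ k : ℕ, ∑ i ∈ Finset.range k, ‖a‖ * ‖q‖ ^ i ≤ ‖a‖ * (1 - ‖q‖)⁻¹ := by
    intro k
    have hs : Summable (fun i : ℕ => ‖a‖ * ‖q‖ ^ i) :=
      (summable_geometric_of_lt_one (norm_nonneg q) hq).mul_left _
    calc ∑ i ∈ Finset.range k, ‖a‖ * ‖q‖ ^ i ≤ ∑' i : ℕ, ‖a‖ * ‖q‖ ^ i :=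
          Summable.sum_le_tsum _ (fun i _ => by positivity) hs
    _ = ‖a‖ * (1 - ‖q‖)⁻¹ := by
        rw [tsum_mul_left, tsum_geometric_of_lt_one (norm_nonneg q) hq]
  calc ‖qPochN a q k‖ ≤ ∏ i ∈ Finset.range k, ‖1 - a * q ^ i‖ := norm_prod_le _ _
  _ ≤ ∏ i ∈ Finset.range k, Real.exp (‖a‖ * ‖q‖ ^ i) := by
      apply Finset.prod_le_prod (fun i _ => norm_nonneg _)
      intro i _
      calc ‖1 - a * q ^ i‖ ≤ ‖(1:ℂ)‖ + ‖a * q ^ i‖ := norm_sub_le _ _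
      _ = 1 + ‖a‖ * ‖q‖ ^ i := by simp [norm_mul, norm_pow]
      _ ≤ Real.exp (‖a‖ * ‖q‖ ^ i) := by
          have := Real.add_one_le_exp (‖a‖ * ‖q‖ ^ i)
          linarith
  _ = Real.exp (∑ i ∈ Finset.range k, ‖a‖ * ‖q‖ ^ i) := by rw [Real.exp_sum]
  _ ≤ _ := Real.exp_le_exp.2 (hsum k)

lemma exists_pos_le_norm {f : ℕ → ℂ} {L : ℂ} (hL : Tendsto f atTop (nhds L))
    (hL0 : L ≠ 0) (hf : ∀ k, f k ≠ 0) : ∃ c > 0, ∀ k, c ≤ ‖f k‖ := by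
  have hnorm : Tendsto (fun k => ‖f k‖) atTop (nhds ‖L‖) := hL.norm
  have hev : ∀ᶠ k in atTop, ‖L‖ / 2 ≤ ‖f k‖ := by
    apply hnorm.eventually (eventually_ge_nhds ?_)
    have : 0 < ‖L‖ := norm_pos_iff.2 hL0
    linarith
  obtain ⟨N, hN⟩ := hev.exists_forall_of_atTop
  set s : Finset ℝ := insert (‖L‖ / 2) ((Finset.range N).image fun k => ‖f k‖) with hs
  have hne : s.Nonempty := Finset.insert_nonempty _ _
  refine ⟨s.min' hne, ?_, ?_⟩
  · have : ∀ x ∈ s, 0 < x := by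
      intro x hx
      rw [hs, Finset.mem_insert] at hx
      rcases hx with rfl | hx
      · have : 0 < ‖L‖ := norm_pos_iff.2 hL0
        linarith
      · obtain ⟨k, _, rfl⟩ := Finset.mem_image.1 hx
        exact norm_pos_iff.2 (hf k)
    exact this _ (s.min'_mem hne)
  · intro k
    rcases lt_or_ge k N with hk | hk
    · exact s.min'_le _ (Finset.mem_insert_of_mem
        (Finset.mem_image.2 ⟨k, Finset.mem_range.2 hk, rfl⟩))
    · exact le_trans (s.min'_le _ (Finset.mem_insert_self _ _)) (hN k hk)


lemma qPochN_lower {a q : ℂ} (hq : ‖q‖ < 1) (h : ∀ k : ℕ, 1 - a * q ^ k ≠ 0) :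
    ∃ c > 0, ∀ k, c ≤ ‖qPochN a q k‖ := by
  apply exists_pos_le_norm (tendsto_qPochN hq a)
  · exact qPochInf_ne_zero hq h
  · intro k; exact qPochN_ne_zero (fun i _ => h i)

lemma qq_factor_ne_zero {q : ℂ} (hq : ‖q‖ < 1) (k : ℕ) : 1 - q * q ^ k ≠ 0 := by
  apply one_sub_ne_zero_of_norm_lt_one
  rw [norm_mul, norm_pow]
  calc ‖q‖ * ‖q‖ ^ k ≤ ‖q‖ * 1 :=
        mul_le_mul_of_nonneg_left (pow_le_one₀ (norm_nonneg q) hq.le) (norm_nonneg q)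
  _ < 1 := by simpa using hq

/-- coefficients of the q-binomial series -/
noncomputable def qbCoeff (a q : ℂ) (k : ℕ) : ℂ := qPochN a q k / qPochN q q k

lemma qbCoeff_zero (a q : ℂ) : qbCoeff a q 0 = 1 := by simp [qbCoeff, qPochN_zero]

lemma qbCoeff_rec {a q : ℂ} (hq : ‖q‖ < 1) (k : ℕ) :
    qbCoeff a q (k + 1) * (1 - q * q ^ k) = qbCoeff a q k * (1 - a * q ^ k) := by
  have h1 : qPochN q q (k+1) = qPochN q q k * (1 - q * q ^ k) := qPochN_succ q q k
  have h2 : qPochN a q (k+1) = qPochN a q k * (1 - a * q ^ k) := qPochN_succ a q k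
  have hne : qPochN q q k ≠ 0 := qPochN_ne_zero (fun i _ => qq_factor_ne_zero hq i)
  have hne' : 1 - q * q ^ k ≠ 0 := qq_factor_ne_zero hq k
  rw [qbCoeff, qbCoeff, h1, h2]
  rw [div_mul_eq_mul_div, div_mul_eq_mul_div, div_eq_div_iff (mul_ne_zero hne hne') hne]
  ring

lemma qbCoeff_bound {a q : ℂ} (hq : ‖q‖ < 1) :
    ∃ C > 0, ∀ k, ‖qbCoeff a q k‖ ≤ C := by
  obtain ⟨c, hc, hcl⟩ := qPochN_lower hq (qq_factor_ne_zero hq)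
  refine ⟨Real.exp (‖a‖ * (1 - ‖q‖)⁻¹) / c, by positivity, fun k => ?_⟩
  rw [qbCoeff, norm_div]
  apply div_le_div₀ (by positivity) (qPochN_norm_le hq a k) hc (hcl k)

lemma summable_qb {a q : ℂ} (hq : ‖q‖ < 1) {w : ℂ} (hw : ‖w‖ < 1) :
    Summable (fun k : ℕ => qbCoeff a q k * w ^ k) := by
  obtain ⟨C, hC, hCb⟩ := qbCoeff_bound (a := a) hq
  have hg : Summable (fun k : ℕ => C * ‖w‖ ^ k) :=
    (summable_geometric_of_lt_one (norm_nonneg w) hw).mul_left C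
  apply Summable.of_norm
  refine Summable.of_nonneg_of_le (fun k => norm_nonneg _) (fun k => ?_) hg
  rw [norm_mul, norm_pow]
  exact mul_le_mul_of_nonneg_right (hCb k) (by positivity)

/-- the q-binomial series -/
noncomputable def qbSum (a q w : ℂ) : ℂ := ∑' k : ℕ, qbCoeff a q k * w ^ k

lemma norm_mul_lt_one {q w : ℂ} (hq : ‖q‖ < 1) (hw : ‖w‖ < 1) : ‖q * w‖ < 1 := by
  rw [norm_mul]
  calc ‖q‖ * ‖w‖ ≤ 1 * ‖w‖ := mul_le_mul_of_nonneg_right hq.le (norm_nonneg w)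
  _ < 1 := by simpa using hw

lemma norm_pow_mul_lt_one {q w : ℂ} (hq : ‖q‖ < 1) (hw : ‖w‖ < 1) (K : ℕ) :
    ‖q ^ K * w‖ < 1 := by
  rw [norm_mul, norm_pow]
  calc ‖q‖ ^ K * ‖w‖ ≤ 1 * ‖w‖ :=
    mul_le_mul_of_nonneg_right (pow_le_one₀ (norm_nonneg q) hq.le) (norm_nonneg w)
  _ < 1 := by simpa using hw

lemma qb_funcEq {a q : ℂ} (hq : ‖q‖ < 1) {w : ℂ} (hw : ‖w‖ < 1) :
    qbSum a q w * (1 - w) = qbSum a q (q * w) * (1 - a * w) := by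
  have hqw : ‖q * w‖ < 1 := norm_mul_lt_one hq hw
  have hS : Summable (fun k : ℕ => qbCoeff a q k * w ^ k) := summable_qb hq hw
  have hS' : Summable (fun k : ℕ => qbCoeff a q k * (q * w) ^ k) := summable_qb hq hqw
  have h1 : qbSum a q w - qbSum a q (q * w)
      = ∑' k : ℕ, qbCoeff a q k * (1 - q ^ k) * w ^ k := by
    rw [qbSum, qbSum, ← Summable.tsum_sub hS hS']
    exact tsum_congr fun k => by rw [mul_pow]; ring
  have hsum2 : Summable (fun k : ℕ => qbCoeff a q k * (1 - q ^ k) * w ^ k) :=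
    (hS.sub hS').congr fun k => by rw [mul_pow]; ring
  have h2 : ∑' k : ℕ, qbCoeff a q k * (1 - q ^ k) * w ^ k
      = ∑' k : ℕ, qbCoeff a q (k+1) * (1 - q ^ (k+1)) * w ^ (k+1) := by
    rw [Summable.tsum_eq_zero_add hsum2]
    simp
  have h3 : ∀ k : ℕ, qbCoeff a q (k+1) * (1 - q ^ (k+1)) * w ^ (k+1)
      = qbCoeff a q k * (1 - a * q ^ k) * w ^ (k+1) := by
    intro k
    have := qbCoeff_rec (a := a) hq k
    have hp : q ^ (k+1) = q * q ^ k := by rw [pow_succ]; ring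
    rw [hp]
    linear_combination w ^ (k+1) * this
  have h4 : ∑' k : ℕ, qbCoeff a q k * (1 - a * q ^ k) * w ^ (k+1)
      = w * qbSum a q w - a * w * qbSum a q (q * w) := by
    have e1 : ∀ k : ℕ, qbCoeff a q k * (1 - a * q ^ k) * w ^ (k+1)
        = w * (qbCoeff a q k * w ^ k) - (a * w) * (qbCoeff a q k * (q * w) ^ k) := by
      intro k; rw [mul_pow]; ring
    rw [tsum_congr e1, Summable.tsum_sub (hS.mul_left w) (hS'.mul_left (a * w)),
      tsum_mul_left, tsum_mul_left, qbSum, qbSum]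
  have key : qbSum a q w - qbSum a q (q * w)
      = w * qbSum a q w - a * w * qbSum a q (q * w) := by
    rw [h1, h2, tsum_congr h3, h4]
  linear_combination key

lemma qb_iter {a q : ℂ} (hq : ‖q‖ < 1) {w : ℂ} (hw : ‖w‖ < 1) (K : ℕ) :
    qbSum a q w * qPochN w q K = qPochN (a * w) q K * qbSum a q (q ^ K * w) := by
  induction K with
  | zero => simp [qPochN_zero]
  | succ K ih =>
    have hKw : ‖q ^ K * w‖ < 1 := norm_pow_mul_lt_one hq hw K
    have hfe := qb_funcEq (a := a) hq hKw
    rw [qPochN_succ, qPochN_succ, ← mul_assoc, ih]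
    have e1 : q * (q ^ K * w) = q ^ (K+1) * w := by rw [pow_succ]; ring
    have e2 : 1 - a * (q ^ K * w) = 1 - a * w * q ^ K := by ring
    have e3 : 1 - w * q ^ K = 1 - q ^ K * w := by ring
    rw [e1, e2] at hfe
    calc qPochN (a * w) q K * qbSum a q (q ^ K * w) * (1 - w * q ^ K)
        = qPochN (a * w) q K * (qbSum a q (q ^ K * w) * (1 - q ^ K * w)) := by ring
    _ = qPochN (a * w) q K * (qbSum a q (q ^ (K+1) * w) * (1 - a * w * q ^ K)) := by
        rw [hfe]
    _ = _ := by ring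

lemma qb_near_one {a q : ℂ} (hq : ‖q‖ < 1) {C : ℝ} (hC : 0 < C)
    (hCb : ∀ k, ‖qbCoeff a q k‖ ≤ C) {u : ℂ} (hu : ‖u‖ ≤ 1/2) :
    ‖qbSum a q u - 1‖ ≤ 2 * C * ‖u‖ := by
  have hu1 : ‖u‖ < 1 := lt_of_le_of_lt hu (by norm_num)
  have hS : Summable (fun k : ℕ => qbCoeff a q k * u ^ k) := summable_qb hq hu1
  have h0 : qbSum a q u - 1 = ∑' k : ℕ, qbCoeff a q (k+1) * u ^ (k+1) := by
    rw [qbSum, Summable.tsum_eq_zero_add hS, qbCoeff_zero]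
    ring
  rw [h0]
  have hsn : Summable (fun k : ℕ => C * ‖u‖ * ‖u‖ ^ k) :=
    (summable_geometric_of_lt_one (norm_nonneg u) hu1).mul_left _
  calc ‖∑' k : ℕ, qbCoeff a q (k+1) * u ^ (k+1)‖
      ≤ ∑' k : ℕ, C * ‖u‖ * ‖u‖ ^ k := by
        apply tsum_of_norm_bounded hsn.hasSum
        intro k
        rw [norm_mul, norm_pow, pow_succ]
        calc ‖qbCoeff a q (k+1)‖ * (‖u‖ ^ k * ‖u‖) ≤ C * (‖u‖ ^ k * ‖u‖) :=
          mul_le_mul_of_nonneg_right (hCb _) (by positivity)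
        _ = C * ‖u‖ * ‖u‖ ^ k := by ring
  _ = C * ‖u‖ * (1 - ‖u‖)⁻¹ := by
      rw [tsum_mul_left, tsum_geometric_of_lt_one (norm_nonneg u) hu1]
  _ ≤ 2 * C * ‖u‖ := by
      have h1 : (1 - ‖u‖)⁻¹ ≤ 2 := by
        rw [inv_le_comm₀ (by linarith) (by norm_num)]
        linarith
      calc C * ‖u‖ * (1 - ‖u‖)⁻¹ ≤ C * ‖u‖ * 2 :=
        mul_le_mul_of_nonneg_left h1 (by positivity)
      _ = 2 * C * ‖u‖ := by ring

lemma qb_tendsto_one {a q : ℂ} (hq : ‖q‖ < 1) {w : ℂ} (hw : ‖w‖ < 1) :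
    Tendsto (fun K : ℕ => qbSum a q (q ^ K * w)) atTop (nhds 1) := by
  obtain ⟨C, hC, hCb⟩ := qbCoeff_bound (a := a) hq
  rw [← tendsto_sub_nhds_zero_iff]
  apply squeeze_zero_norm' (a := fun K : ℕ => 2 * C * (‖w‖ * ‖q‖ ^ K))
  · have hev : ∀ᶠ K : ℕ in atTop, ‖q ^ K * w‖ ≤ 1/2 := by
      have ht : Tendsto (fun K : ℕ => ‖q ^ K * w‖) atTop (nhds 0) := by
        have h' : Tendsto (fun K : ℕ => q ^ K * w) atTop (nhds 0) := by
          simpa using (tendsto_pow_atTop_nhds_zero_of_norm_lt_one hq).mul_const w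
        simpa using h'.norm
      exact ht.eventually_le_const (by norm_num)
    filter_upwards [hev] with K hK
    calc ‖qbSum a q (q ^ K * w) - 1‖ ≤ 2 * C * ‖q ^ K * w‖ := qb_near_one hq hC hCb hK
    _ = 2 * C * (‖w‖ * ‖q‖ ^ K) := by rw [norm_mul, norm_pow]; ring
  · have : Tendsto (fun K : ℕ => ‖w‖ * ‖q‖ ^ K) atTop (nhds (‖w‖ * 0)) :=
      tendsto_const_nhds.mul (tendsto_pow_atTop_nhds_zero_of_lt_one (norm_nonneg q) hq)
    rw [mul_zero] at this
    simpa using this.const_mul (2 * C)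

theorem q_binomial {a q : ℂ} (hq : ‖q‖ < 1) {w : ℂ} (hw : ‖w‖ < 1) :
    qbSum a q w * qPochInf w q = qPochInf (a * w) q := by
  have h1 : Tendsto (fun K : ℕ => qbSum a q w * qPochN w q K) atTop
      (nhds (qbSum a q w * qPochInf w q)) := (tendsto_qPochN hq w).const_mul _
  have h2 : Tendsto (fun K : ℕ => qPochN (a * w) q K * qbSum a q (q ^ K * w)) atTop
      (nhds (qPochInf (a * w) q * 1)) :=
    (tendsto_qPochN hq (a * w)).mul (qb_tendsto_one hq hw)
  rw [mul_one] at h2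
  exact tendsto_nhds_unique (h1.congr fun K => qb_iter hq hw K) h2

section assembly

variable (m : ℕ) (lam : Fin (m + 2) → ℕ) (q t : ℂ)

/-- the integer gaps `m_j = λ_j - λ_{j+1}` -/
def gap (j : Fin (m + 1)) : ℕ := lam j.castSucc - lam j.succ

lemma gap_cast (hlam : Antitone lam) (j : Fin (m + 1)) :
    (gap m lam j : ℤ) = (lam j.castSucc : ℤ) - (lam j.succ : ℤ) := by
  have h : lam j.succ ≤ lam j.castSucc := hlam (Fin.castSucc_le_succ j)
  rw [gap, Nat.cast_sub h]

lemma sum_gap (hlam : Antitone lam) :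
    ((∑ j, gap m lam j : ℕ) : ℤ) = (lam 0 : ℤ) - (lam (Fin.last (m + 1)) : ℤ) := by
  push_cast
  have hf : ∀ j : Fin (m + 1), (gap m lam j : ℤ)
      = (fun i : ℕ => (lam ⟨min i (m + 1), by omega⟩ : ℤ)) j.val
        - (fun i : ℕ => (lam ⟨min i (m + 1), by omega⟩ : ℤ)) (j.val + 1) := by
    intro j
    rw [gap_cast m lam hlam]
    have h1 : (⟨min (j.val) (m + 1), by omega⟩ : Fin (m + 2)) = j.castSucc := by
      apply Fin.ext
      simp only [Fin.coe_castSucc]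
      omega
    have h2 : (⟨min (j.val + 1) (m + 1), by omega⟩ : Fin (m + 2)) = j.succ := by
      apply Fin.ext
      simp only [Fin.val_succ]
      omega
    simp only [h1, h2]
  rw [Finset.sum_congr rfl (fun j _ => hf j)]
  rw [Fin.sum_univ_eq_sum_range
    (fun i => (fun i : ℕ => (lam ⟨min i (m + 1), by omega⟩ : ℤ)) i
      - (fun i : ℕ => (lam ⟨min i (m + 1), by omega⟩ : ℤ)) (i + 1))]
  rw [Finset.sum_range_sub' (fun i : ℕ => (lam ⟨min i (m + 1), by omega⟩ : ℤ))]
  have h0 : (⟨min 0 (m + 1), by omega⟩ : Fin (m + 2)) = 0 := by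
    apply Fin.ext
    simp
  have hl : (⟨min (m + 1) (m + 1), by omega⟩ : Fin (m + 2)) = Fin.last (m + 1) := by
    apply Fin.ext
    simp [Fin.last]
  simp only [h0, hl]

lemma aPar_succ (hq : q ≠ 0) (ht : t ≠ 0) (hlam : Antitone lam) (j : Fin (m + 1)) :
    aPar m lam q t j.succ = bPar m lam q t j * q ^ (gap m lam j) := by
  have h : lam j.succ ≤ lam j.castSucc := hlam (Fin.castSucc_le_succ j)
  rw [bPar, aPar, aPar]
  have hsv : ((j.succ : Fin (m + 2)) : ℤ) = (j : ℕ) + 1 := by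
    simp [Fin.val_succ]
  have hcv : ((j.castSucc : Fin (m + 2)) : ℤ) = (j : ℕ) := by
    simp
  rw [hsv, hcv]
  have e1 : (1 + (lam (Fin.last (m + 1)) : ℤ) - (lam j.succ : ℤ))
      = (1 + (lam (Fin.last (m + 1)) : ℤ) - (lam j.castSucc : ℤ)) + (gap m lam j : ℤ) := by
    rw [gap_cast m lam hlam]; ring
  have e2 : ((j : ℕ) : ℤ) + 1 - (m + 2 : ℤ) = (((j : ℕ) : ℤ) - (m + 2 : ℤ)) + 1 := by ring
  rw [e1, e2, zpow_add₀ hq, zpow_add₀ ht, zpow_natCast, zpow_one]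
  ring

lemma aPar_zero_mul (hq : q ≠ 0) (hlam : Antitone lam) {Nt : ℕ}
    (hNt : (Nt : ℤ) = (lam 0 : ℤ) - (lam (Fin.last (m + 1)) : ℤ)) :
    aPar m lam q t 0 * q ^ Nt = q * t ^ (-(m + 2 : ℤ)) := by
  rw [aPar]
  have h0 : (((0 : Fin (m + 2)) : ℕ) : ℤ) = 0 := by simp
  rw [h0]
  have : (q : ℂ) ^ (Nt : ℕ) = q ^ ((Nt : ℤ)) := by rw [zpow_natCast]
  rw [mul_comm (q ^ (1 + (lam (Fin.last (m + 1)) : ℤ) - (lam 0 : ℤ))), mul_assoc, this, hNt,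
    ← zpow_add₀ hq]
  have e : (1 + (lam (Fin.last (m + 1)) : ℤ) - (lam 0 : ℤ))
      + ((lam 0 : ℤ) - (lam (Fin.last (m + 1)) : ℤ)) = 1 := by ring
  rw [e, zpow_one, zero_sub]
  ring

end assembly

section assembly2

variable (m : ℕ) (lam : Fin (m + 2) → ℕ) (q t : ℂ)

lemma term_identity (hq1 : ‖q‖ < 1) (hq : q ≠ 0) (ht : t ≠ 0) (hlam : Antitone lam)
    (hbfac : ∀ j : Fin (m + 1), ∀ i : ℕ, 1 - bPar m lam q t j * q ^ i ≠ 0) (k : ℕ) :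
    (∏ i, qPochN (aPar m lam q t i) q k) /
      (qPochN q q k * ∏ j, qPochN (bPar m lam q t j) q k)
    = qbCoeff (aPar m lam q t 0) q k *
        ((∏ j, qPochN (bPar m lam q t j * q ^ k) q (gap m lam j)) /
          (∏ j, qPochN (bPar m lam q t j) q (gap m lam j))) := by
  have hnum : (∏ i, qPochN (aPar m lam q t i) q k)
      = qPochN (aPar m lam q t 0) q k *
        ∏ j, qPochN (bPar m lam q t j * q ^ (gap m lam j)) q k := by
    rw [Fin.prod_univ_succ (fun i => qPochN (aPar m lam q t i) q k)]
    congr 1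
    exact Finset.prod_congr rfl fun j _ => by rw [aPar_succ m lam q t hq ht hlam j]
  have hprod : (∏ j, qPochN (bPar m lam q t j * q ^ (gap m lam j)) q k) *
      (∏ j, qPochN (bPar m lam q t j) q (gap m lam j))
      = (∏ j, qPochN (bPar m lam q t j) q k) *
        (∏ j, qPochN (bPar m lam q t j * q ^ k) q (gap m lam j)) := by
    rw [← Finset.prod_mul_distrib, ← Finset.prod_mul_distrib]
    refine Finset.prod_congr rfl fun j _ => ?_
    rw [mul_comm]
    exact qPochN_swap (bPar m lam q t j) q (gap m lam j) k
  have hQ : qPochN q q k ≠ 0 := qPochN_ne_zero (fun i _ => qq_factor_ne_zero hq1 i)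
  have hY : (∏ j, qPochN (bPar m lam q t j) q k) ≠ 0 :=
    Finset.prod_ne_zero_iff.2 fun j _ => qPochN_ne_zero (fun i _ => hbfac j i)
  have hV : (∏ j, qPochN (bPar m lam q t j) q (gap m lam j)) ≠ 0 :=
    Finset.prod_ne_zero_iff.2 fun j _ => qPochN_ne_zero (fun i _ => hbfac j i)
  rw [hnum, qbCoeff, div_mul_div_comm,
    div_eq_div_iff (mul_ne_zero hQ hY) (mul_ne_zero hQ hV)]
  linear_combination (qPochN (aPar m lam q t 0) q k * qPochN q q k) * hprod

lemma lin_natDegree (c : ℂ) : (1 - Polynomial.C c * Polynomial.X).natDegree ≤ 1 := by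
  apply (Polynomial.natDegree_sub_le _ _).trans
  apply max_le (by simp)
  exact (Polynomial.natDegree_C_mul_le _ _).trans Polynomial.natDegree_X_le

lemma prod_lin_natDegree {s : Finset ℕ} (c : ℕ → ℂ) :
    (∏ i ∈ s, (1 - Polynomial.C (c i) * Polynomial.X)).natDegree ≤ s.card := by
  apply (Polynomial.natDegree_prod_le _ _).trans
  rw [Finset.card_eq_sum_ones]
  exact Finset.sum_le_sum fun i _ => lin_natDegree (c i)

lemma P_natDegree :
    (∏ j, ∏ i ∈ Finset.range (gap m lam j),
      (1 - Polynomial.C (bPar m lam q t j * q ^ i) * Polynomial.X)).natDegree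
      ≤ ∑ j, gap m lam j := by
  apply (Polynomial.natDegree_prod_le _ _).trans
  apply Finset.sum_le_sum
  intro j _
  exact (prod_lin_natDegree _).trans (by simp)

lemma bhs_eq (hq1 : ‖q‖ < 1) (hq : q ≠ 0) (ht : t ≠ 0) (hlam : Antitone lam)
    (hbfac : ∀ j : Fin (m + 1), ∀ i : ℕ, 1 - bPar m lam q t j * q ^ i ≠ 0)
    {z : ℂ} (hz : ‖z‖ < 1) :
    bhs (aPar m lam q t) (bPar m lam q t) q z
      = ∑ d ∈ Finset.range ((∑ j, gap m lam j) + 1),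
          ((∏ j, ∏ i ∈ Finset.range (gap m lam j),
              (1 - Polynomial.C (bPar m lam q t j * q ^ i) * Polynomial.X)).coeff d
            / (∏ j, qPochN (bPar m lam q t j) q (gap m lam j)))
          * qbSum (aPar m lam q t 0) q (q ^ d * z) := by
  set N := ∑ j, gap m lam j with hN
  set P := ∏ j, ∏ i ∈ Finset.range (gap m lam j),
      (1 - Polynomial.C (bPar m lam q t j * q ^ i) * Polynomial.X) with hP
  set B := ∏ j, qPochN (bPar m lam q t j) q (gap m lam j) with hB
  have hPdeg : P.natDegree < N + 1 :=
    Nat.lt_succ_of_le (P_natDegree m lam q t)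
  have hPev : ∀ k : ℕ, P.eval (q ^ k) = ∏ j, qPochN (bPar m lam q t j * q ^ k) q (gap m lam j) := by
    intro k
    rw [hP, Polynomial.eval_prod]
    refine Finset.prod_congr rfl fun j _ => ?_
    rw [Polynomial.eval_prod, qPochN]
    refine Finset.prod_congr rfl fun i _ => ?_
    simp only [Polynomial.eval_sub, Polynomial.eval_one, Polynomial.eval_mul,
      Polynomial.eval_C, Polynomial.eval_X]
    ring
  have hterm : ∀ k : ℕ,
      (∏ i, qPochN (aPar m lam q t i) q k) /
        (qPochN q q k * ∏ j, qPochN (bPar m lam q t j) q k) * z ^ k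
      = ∑ d ∈ Finset.range (N + 1),
          (P.coeff d / B) * (qbCoeff (aPar m lam q t 0) q k * (q ^ d * z) ^ k) := by
    intro k
    rw [term_identity m lam q t hq1 hq ht hlam hbfac k, ← hB, ← hPev k,
      Polynomial.eval_eq_sum_range' hPdeg]
    rw [Finset.sum_div, Finset.mul_sum, Finset.sum_mul]
    refine Finset.sum_congr rfl fun d _ => ?_
    have he : (q ^ d * z) ^ k = (q ^ k) ^ d * z ^ k := by
      rw [mul_pow, ← pow_mul, ← pow_mul, Nat.mul_comm]
    rw [he]
    ring
  rw [bhs, tsum_congr hterm]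
  rw [Summable.tsum_finsetSum (fun d _ => Summable.mul_left _
    (summable_qb hq1 (norm_pow_mul_lt_one hq1 hz d)))]
  refine Finset.sum_congr rfl fun d _ => ?_
  rw [tsum_mul_left, qbSum]

end assembly2


theorem stmt0 (m : ℕ) (lam : Fin (m + 2) → ℕ) (hlam : Antitone lam)
    (q t : ℂ) (hq0 : 0 < ‖q‖) (hq1 : ‖q‖ < 1) (ht : t ≠ 0)
    (hb : ∀ j : Fin (m + 1), ∀ k : ℕ, bPar m lam q t j * q ^ k ≠ 1) :
    ∃ c : ℕ → ℂ, ∀ z : ℂ, ‖z‖ < 1 →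
      qPochInf (q * z * t ^ (-(m + 2 : ℤ))) q ≠ 0 →
      psiLam m lam q t z =
        ∑ k ∈ Finset.Icc (lam (Fin.last (m + 1))) (lam 0), c k * z ^ k := by
  have hq1n : ‖q‖ < 1 := by exact hq1
  have hqne : q ≠ 0 := by
    intro h; rw [h] at hq0; simp at hq0
  have hbfac : ∀ j : Fin (m + 1), ∀ i : ℕ, 1 - bPar m lam q t j * q ^ i ≠ 0 :=
    fun j i => sub_ne_zero.2 (Ne.symm (hb j i))
  set L := lam (Fin.last (m + 1)) with hLdef
  set N := ∑ j, gap m lam j with hNdef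
  have hNint : (N : ℤ) = (lam 0 : ℤ) - (L : ℤ) := sum_gap m lam hlam
  have hlam0 : L + N = lam 0 := by omega
  set a1 := aPar m lam q t 0 with ha1
  set B := ∏ j, qPochN (bPar m lam q t j) q (gap m lam j) with hB
  set P := ∏ j, ∏ i ∈ Finset.range (gap m lam j),
      (1 - Polynomial.C (bPar m lam q t j * q ^ i) * Polynomial.X) with hP
  set S := ∑ d ∈ Finset.range (N + 1), Polynomial.C (P.coeff d / B) *
      ((∏ i ∈ Finset.range d, (1 - Polynomial.C (q ^ i) * Polynomial.X)) *
       (∏ i ∈ Finset.range (N - d), (1 - Polynomial.C (a1 * q ^ (d + i)) * Polynomial.X)))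
    with hS
  refine ⟨fun k => (Polynomial.X ^ L * S).coeff k, ?_⟩
  intro z hz hD
  have hzn : ‖z‖ < 1 := by exact hz
  set D := qPochInf (q * z * t ^ (-(m + 2 : ℤ))) q with hDdef
  have key : ∀ d ∈ Finset.range (N + 1), qPochInf z q * qbSum a1 q (q ^ d * z)
      = qPochN z q d * qPochN (a1 * q ^ d * z) q (N - d) * D := by
    intro d hd
    have hdN : d ≤ N := by
      have := Finset.mem_range.1 hd; omega
    have h1 : qPochInf z q = qPochN z q d * qPochInf (q ^ d * z) q := by
      rw [qPochInf_split hq1n z d, mul_comm z (q ^ d)]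
    have h2 : qbSum a1 q (q ^ d * z) * qPochInf (q ^ d * z) q
        = qPochInf (a1 * (q ^ d * z)) q := q_binomial hq1n (norm_pow_mul_lt_one hq1n hzn d)
    have h3 : qPochInf (a1 * (q ^ d * z)) q
        = qPochN (a1 * (q ^ d * z)) q (N - d)
          * qPochInf (a1 * (q ^ d * z) * q ^ (N - d)) q :=
      qPochInf_split hq1n _ (N - d)
    have h5 : a1 * q ^ N = q * t ^ (-(m + 2 : ℤ)) := aPar_zero_mul m lam q t hqne hlam hNint
    have h4 : a1 * (q ^ d * z) * q ^ (N - d) = q * z * t ^ (-(m + 2 : ℤ)) := by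
      calc a1 * (q ^ d * z) * q ^ (N - d) = a1 * q ^ (d + (N - d)) * z := by
            rw [pow_add]; ring
      _ = a1 * q ^ N * z := by rw [Nat.add_sub_cancel' hdN]
      _ = q * t ^ (-(m + 2 : ℤ)) * z := by rw [h5]
      _ = q * z * t ^ (-(m + 2 : ℤ)) := by ring
    have h6 : a1 * (q ^ d * z) = a1 * q ^ d * z := by ring
    calc qPochInf z q * qbSum a1 q (q ^ d * z)
        = qPochN z q d * (qbSum a1 q (q ^ d * z) * qPochInf (q ^ d * z) q) := by
          rw [h1]; ring
    _ = qPochN z q d * (qPochN (a1 * (q ^ d * z)) q (N - d)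
          * qPochInf (a1 * (q ^ d * z) * q ^ (N - d)) q) := by rw [h2, h3]
    _ = qPochN z q d * qPochN (a1 * q ^ d * z) q (N - d) * D := by
          rw [h4, h6, ← hDdef]; ring
  have hsum : qPochInf z q * ∑ d ∈ Finset.range (N + 1),
        (P.coeff d / B) * qbSum a1 q (q ^ d * z)
      = (∑ d ∈ Finset.range (N + 1),
          (P.coeff d / B) * (qPochN z q d * qPochN (a1 * q ^ d * z) q (N - d))) * D := by
    rw [Finset.mul_sum, Finset.sum_mul]
    refine Finset.sum_congr rfl fun d hd => ?_
    calc qPochInf z q * ((P.coeff d / B) * qbSum a1 q (q ^ d * z))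
        = (P.coeff d / B) * (qPochInf z q * qbSum a1 q (q ^ d * z)) := by ring
    _ = (P.coeff d / B) * (qPochN z q d * qPochN (a1 * q ^ d * z) q (N - d) * D) := by
        rw [key d hd]
    _ = _ := by ring
  have hmain : psiLam m lam q t z
      = z ^ L * ∑ d ∈ Finset.range (N + 1),
          (P.coeff d / B) * (qPochN z q d * qPochN (a1 * q ^ d * z) q (N - d)) := by
    rw [psiLam, phiLam, bhs_eq m lam q t hq1n hqne ht hlam hbfac hzn]
    rw [← hP, ← hB, ← ha1, ← hNdef, ← hLdef, ← hDdef]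
    rw [div_mul_eq_mul_div, div_eq_iff hD]
    linear_combination (z ^ L) * hsum
  have hRev : (Polynomial.X ^ L * S).eval z
      = z ^ L * ∑ d ∈ Finset.range (N + 1),
          (P.coeff d / B) * (qPochN z q d * qPochN (a1 * q ^ d * z) q (N - d)) := by
    rw [Polynomial.eval_mul, Polynomial.eval_pow, Polynomial.eval_X, hS,
      Polynomial.eval_finset_sum]
    congr 1
    refine Finset.sum_congr rfl fun d hd => ?_
    rw [Polynomial.eval_mul, Polynomial.eval_mul, Polynomial.eval_C,
      Polynomial.eval_prod, Polynomial.eval_prod]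
    congr 1
    congr 1
    · rw [qPochN]
      refine Finset.prod_congr rfl fun i _ => ?_
      simp only [Polynomial.eval_sub, Polynomial.eval_one, Polynomial.eval_mul,
        Polynomial.eval_C, Polynomial.eval_X]
      ring
    · rw [qPochN]
      refine Finset.prod_congr rfl fun i _ => ?_
      simp only [Polynomial.eval_sub, Polynomial.eval_one, Polynomial.eval_mul,
        Polynomial.eval_C, Polynomial.eval_X]
      rw [pow_add]
      ring
  have hSdeg : S.natDegree ≤ N := by
    apply Polynomial.natDegree_sum_le_of_forall_le
    intro d hd
    have hdN : d ≤ N := by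
      have := Finset.mem_range.1 hd; omega
    calc (Polynomial.C (P.coeff d / B) *
        ((∏ i ∈ Finset.range d, (1 - Polynomial.C (q ^ i) * Polynomial.X)) *
         (∏ i ∈ Finset.range (N - d),
            (1 - Polynomial.C (a1 * q ^ (d + i)) * Polynomial.X)))).natDegree
        ≤ ((∏ i ∈ Finset.range d, (1 - Polynomial.C (q ^ i) * Polynomial.X)) *
           (∏ i ∈ Finset.range (N - d),
              (1 - Polynomial.C (a1 * q ^ (d + i)) * Polynomial.X))).natDegree :=
          Polynomial.natDegree_C_mul_le _ _
    _ ≤ (∏ i ∈ Finset.range d, (1 - Polynomial.C (q ^ i) * Polynomial.X)).natDegree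
        + (∏ i ∈ Finset.range (N - d),
            (1 - Polynomial.C (a1 * q ^ (d + i)) * Polynomial.X)).natDegree :=
          Polynomial.natDegree_mul_le
    _ ≤ d + (N - d) := by
        apply add_le_add
        · exact (prod_lin_natDegree _).trans (by simp)
        · exact (prod_lin_natDegree _).trans (by simp)
    _ ≤ N := by omega
  have hdeg : (Polynomial.X ^ L * S).natDegree < lam 0 + 1 := by
    apply Nat.lt_succ_of_le
    calc (Polynomial.X ^ L * S).natDegree
        ≤ (Polynomial.X ^ L : Polynomial ℂ).natDegree + S.natDegree :=
          Polynomial.natDegree_mul_le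
    _ ≤ L + N := by
        rw [Polynomial.natDegree_X_pow]
        exact Nat.add_le_add_left hSdeg L
    _ = lam 0 := hlam0
  have hvanish : ∀ k ∈ Finset.range (lam 0 + 1), k ∉ Finset.Icc L (lam 0) →
      (Polynomial.X ^ L * S).coeff k * z ^ k = 0 := by
    intro k hk hk2
    have hkr := Finset.mem_range.1 hk
    have hkL : k < L := by
      by_contra h
      exact hk2 (Finset.mem_Icc.2 ⟨by omega, by omega⟩)
    have hcomm : Polynomial.X ^ L * S = S * Polynomial.X ^ L := mul_comm _ _
    rw [hcomm, Polynomial.coeff_mul_X_pow', if_neg (by omega)]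
    ring
  have hsub : Finset.Icc L (lam 0) ⊆ Finset.range (lam 0 + 1) := by
    intro k hk
    have := Finset.mem_Icc.1 hk
    exact Finset.mem_range.2 (by omega)
  rw [hmain, ← hRev, Polynomial.eval_eq_sum_range' hdeg,
    Finset.sum_subset hsub hvanish]
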